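/- On a weak nearly Sasakian manifold M^{2n+1}(φ,Q,ξ,η,g), the following identities hold for every vector field X: (∇_X h)ξ = -h(h-φ)X and (∇_X φ)ξ = -φ(h-φ)X. -/

import Mathlib

/-- An abstract (Koszul-style) model of the algebra of smooth vector fields on a
`(2n+1)`-dimensional Riemannian manifold `M` carrying a weak nearly Sasakian
structure `(φ, Q, ξ, η, g)`: `VF` is the space of (smooth) vector fields, `fsmul`
is multiplication of a vector field by a smooth function `M → ℝ`, `lie` is the
Lie bracket, `deriv X f` is the derivative of the function `f` in the direction of
the vector field `X`, `g` is the Riemannian metric, `cov` is its Levi-Civita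
connection, and `frame` is an orthonormal frame (encoding that `dim M = 2n+1`).
The axioms are: `VF` is a module over functions, `deriv` is a derivation, `g` is a
symmetric positive definite function-bilinear form, `cov` is a torsion-free metric
connection, `φ` and `Q` are `(1,1)`-tensor fields with `Q` nonsingular, `η` is a
1-form, `φ² = -Q + η ⊗ ξ`, `η(ξ) = 1`, `Qξ = ξ`, `ker η` is `φ`-invariant,
`g(φX, φY) = g(X, QY) - η(X)η(Y)`, and the nearly Sasakian condition
`(∇_Y φ)Y = g(Y,Y) ξ - η(Y) Y`. -/
structure WeakNearlySasakianManifold (M : Type*) (n : ℕ) where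
  VF : Type*
  [instAddCommGroup : AddCommGroup VF]
  [instModule : Module ℝ VF]
  fsmul : (M → ℝ) → VF → VF
  lie : VF → VF → VF
  deriv : VF → (M → ℝ) → M → ℝ
  g : VF → VF → M → ℝ
  cov : VF → VF → VF
  phi : VF → VF
  Q : VF → VF
  xi : VF
  eta : VF → M → ℝ
  frame : Fin (2 * n + 1) → VF
  npos : 1 ≤ n
  -- `fsmul` makes `VF` a module over the smooth functions
  fsmul_one : ∀ X, fsmul 1 X = X
  fsmul_add : ∀ f X Y, fsmul f (X + Y) = fsmul f X + fsmul f Y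
  add_fsmul : ∀ f₁ f₂ X, fsmul (f₁ + f₂) X = fsmul f₁ X + fsmul f₂ X
  mul_fsmul : ∀ f₁ f₂ X, fsmul (f₁ * f₂) X = fsmul f₁ (fsmul f₂ X)
  fsmul_const : ∀ (c : ℝ) X, fsmul (fun _ => c) X = c • X
  -- `deriv` is a derivation in the function, tensorial in the vector field
  deriv_add : ∀ X f₁ f₂, deriv X (f₁ + f₂) = deriv X f₁ + deriv X f₂
  deriv_mul : ∀ X f₁ f₂, deriv X (f₁ * f₂) = f₁ * deriv X f₂ + f₂ * deriv X f₁
  deriv_const : ∀ X (c : ℝ), deriv X (fun _ => c) = 0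
  deriv_add_vf : ∀ X Y f, deriv (X + Y) f = deriv X f + deriv Y f
  deriv_fsmul : ∀ f X k, deriv (fsmul f X) k = f * deriv X k
  -- the Lie bracket
  lie_antisymm : ∀ X Y, lie X Y = -lie Y X
  lie_add_right : ∀ X Y Z, lie X (Y + Z) = lie X Y + lie X Z
  lie_leibniz : ∀ X f Y, lie X (fsmul f Y) = fsmul f (lie X Y) + fsmul (deriv X f) Y
  -- the Riemannian metric
  g_symm : ∀ X Y, g X Y = g Y X
  g_add_left : ∀ X Y Z, g (X + Y) Z = g X Z + g Y Z
  g_fsmul_left : ∀ f X Y, g (fsmul f X) Y = f * g X Y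
  g_nonneg : ∀ X p, 0 ≤ g X X p
  g_nondegenerate : ∀ X, g X X = 0 → X = 0
  -- the Levi-Civita connection
  cov_add_left : ∀ X Y Z, cov (X + Y) Z = cov X Z + cov Y Z
  cov_add_right : ∀ X Y Z, cov X (Y + Z) = cov X Y + cov X Z
  cov_fsmul_left : ∀ f X Y, cov (fsmul f X) Y = fsmul f (cov X Y)
  cov_leibniz : ∀ f X Y, cov X (fsmul f Y) = fsmul f (cov X Y) + fsmul (deriv X f) Y
  cov_torsion_free : ∀ X Y, cov X Y - cov Y X = lie X Y
  cov_metric : ∀ X Y Z, deriv X (g Y Z) = g (cov X Y) Z + g Y (cov X Z)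
  -- `φ`, `Q` are `(1,1)`-tensor fields, `Q` nonsingular, `η` is a 1-form
  phi_add : ∀ X Y, phi (X + Y) = phi X + phi Y
  phi_fsmul : ∀ f X, phi (fsmul f X) = fsmul f (phi X)
  Q_add : ∀ X Y, Q (X + Y) = Q X + Q Y
  Q_fsmul : ∀ f X, Q (fsmul f X) = fsmul f (Q X)
  Q_bijective : Function.Bijective Q
  eta_add : ∀ X Y, eta (X + Y) = eta X + eta Y
  eta_fsmul : ∀ f X, eta (fsmul f X) = f * eta X
  -- the weak almost contact metric conditions
  phi_phi : ∀ X, phi (phi X) = -Q X + fsmul (eta X) xi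
  eta_xi : eta xi = 1
  Q_xi : Q xi = xi
  phi_invariant : ∀ X, eta X = 0 → eta (phi X) = 0
  metric_compat : ∀ X Y, g (phi X) (phi Y) = g X (Q Y) - eta X * eta Y
  -- an orthonormal frame: `M` has dimension `2 * n + 1`
  frame_orthonormal : ∀ i j, g (frame i) (frame j) = fun _ => if i = j then (1 : ℝ) else 0
  frame_spanning : ∀ X, ∃ c : Fin (2 * n + 1) → M → ℝ, X = ∑ i, fsmul (c i) (frame i)
  -- the weak nearly Sasakian condition `(∇_Y φ)Y = g(Y,Y) ξ - η(Y) Y`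
  nearlySasakian : ∀ Y, cov Y (phi Y) - phi (cov Y Y) = fsmul (g Y Y) xi - fsmul (eta Y) Y

attribute [instance] WeakNearlySasakianManifold.instAddCommGroup
attribute [instance] WeakNearlySasakianManifold.instModule

namespace WeakNearlySasakianManifold

variable {M : Type*} {n : ℕ} (S : WeakNearlySasakianManifold M n)

/-- `(∇_X φ) Y` -/
def covPhi (X Y : S.VF) : S.VF := S.cov X (S.phi Y) - S.phi (S.cov X Y)

/-- the tensor `Q̃ = Q - id` -/
def Qt (X : S.VF) : S.VF := S.Q X - X

/-- `(∇_X Q̃) Y` -/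
def covQt (X Y : S.VF) : S.VF := S.cov X (S.Qt Y) - S.Qt (S.cov X Y)

/-- the tensor `h = ∇ξ + φ` -/
def h (X : S.VF) : S.VF := S.cov X S.xi + S.phi X

/-- `(∇_X h) Y` -/
def covh (X Y : S.VF) : S.VF := S.cov X (S.h Y) - S.h (S.cov X Y)

/-- the tensor `(h - φ)` -/
def hmphi (X : S.VF) : S.VF := S.h X - S.phi X

/-- `(∇_X (h - φ)) Y` -/
def covhmphi (X Y : S.VF) : S.VF := S.cov X (S.hmphi Y) - S.hmphi (S.cov X Y)

/-- the Riemann curvature tensor `R_{X,Y} Z = ∇_X ∇_Y Z - ∇_Y ∇_X Z - ∇_{[X,Y]} Z` -/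
def R (X Y Z : S.VF) : S.VF :=
  S.cov X (S.cov Y Z) - S.cov Y (S.cov X Z) - S.cov (S.lie X Y) Z

/-- Condition (4): `(∇_X Q̃) Y = 0` for every vector field `X` and every `Y ∈ ker η`. -/
def Cond4 : Prop := ∀ X Y : S.VF, S.eta Y = 0 → S.covQt X Y = 0

/-- Condition (5): `R_{Q̃X, Y} Z ∈ ker η` for every vector field `X` and all `Y, Z ∈ ker η`. -/
def Cond5 : Prop :=
  ∀ X Y Z : S.VF, S.eta Y = 0 → S.eta Z = 0 → S.eta (S.R (S.Qt X) Y Z) = 0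

/-- the trace of a `(1,1)`-tensor field -/
def trace (A : S.VF → S.VF) : M → ℝ := ∑ i, S.g (A (S.frame i)) (S.frame i)

/-- the Ricci tensor `Ric(X,Y) = Σᵢ g(R_{Eᵢ,X} Y, Eᵢ)` -/
def Ric (X Y : S.VF) : M → ℝ := ∑ i, S.g (S.R (S.frame i) X Y) (S.frame i)

end WeakNearlySasakianManifold

/-! Both identities come from `hξ = 0`, `φξ = 0` and `(h - φ)X = ∇_X ξ`: then
`(∇_X h)ξ = ∇_X(hξ) - h(∇_X ξ) = -h(h - φ)X`, and likewise for `φ`.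
Since `Q` is injective, `φ² = -Q + η ⊗ ξ` forces `ker φ` to be spanned by `ξ`; this gives
`φξ = 0` and `∇_ξ ξ = f ξ`, where the nearly Sasakian condition at `Y = ξ` supplies
`φ(∇_ξ ξ) = 0`. Finally `f = g(∇_ξ ξ, ξ) = 0` because `g(ξ, ξ) = 1` is constant. -/

namespace WeakNearlySasakianManifold

section

variable {M : Type*} {n : ℕ} (S : WeakNearlySasakianManifold M n)

lemma zero_fsmul (X : S.VF) : S.fsmul 0 X = 0 :=
  (AddMonoidHom.mk' (S.fsmul · X) (S.add_fsmul · · X)).map_zero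

lemma phi_zero : S.phi 0 = 0 :=
  (AddMonoidHom.mk' S.phi S.phi_add).map_zero

lemma phi_sub (X Y : S.VF) : S.phi (X - Y) = S.phi X - S.phi Y :=
  (AddMonoidHom.mk' S.phi S.phi_add).map_sub X Y

lemma Q_zero : S.Q 0 = 0 :=
  (AddMonoidHom.mk' S.Q S.Q_add).map_zero

lemma eta_neg (X : S.VF) : S.eta (-X) = -S.eta X :=
  (AddMonoidHom.mk' S.eta S.eta_add).map_neg X

lemma eta_sub (X Y : S.VF) : S.eta (X - Y) = S.eta X - S.eta Y :=
  (AddMonoidHom.mk' S.eta S.eta_add).map_sub X Y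

lemma cov_zero_right (X : S.VF) : S.cov X 0 = 0 :=
  (AddMonoidHom.mk' (S.cov X) (S.cov_add_right X)).map_zero

lemma g_zero_left (X : S.VF) : S.g 0 X = 0 :=
  (AddMonoidHom.mk' (S.g · X) (S.g_add_left · · X)).map_zero

lemma eq_eta_fsmul_xi_of_phi_eq_zero {Z : S.VF} (hZ : S.phi Z = 0) :
    Z = S.fsmul (S.eta Z) S.xi := by
  apply S.Q_bijective.injective
  have hφφ := S.phi_phi Z
  rw [hZ, phi_zero] at hφφ
  rw [S.Q_fsmul, S.Q_xi]
  exact neg_add_eq_zero.mp hφφ.symm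

lemma phi_phi_xi : S.phi (S.phi S.xi) = 0 := by
  rw [S.phi_phi, S.eta_xi, S.fsmul_one, S.Q_xi, neg_add_cancel]

lemma eta_phi_xi : S.eta (S.phi S.xi) = 0 := by
  set f := S.eta (S.phi S.xi) with hf
  -- `φξ - fξ ∈ ker η` and `η(φ(φξ - fξ)) = -f²`
  have hker : S.eta (S.phi S.xi - S.fsmul f S.xi) = 0 := by
    rw [eta_sub, S.eta_fsmul, S.eta_xi, mul_one, sub_self]
  have hsq := S.phi_invariant _ hker
  rw [phi_sub, S.phi_fsmul, phi_phi_xi, zero_sub, eta_neg, S.eta_fsmul, ← hf,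
    neg_eq_zero] at hsq
  funext p
  exact mul_self_eq_zero.mp (congrFun hsq p)

lemma phi_xi : S.phi S.xi = 0 := by
  rw [S.eq_eta_fsmul_xi_of_phi_eq_zero S.phi_phi_xi, eta_phi_xi, zero_fsmul]

lemma g_xi_xi : S.g S.xi S.xi = 1 := by
  have h := S.metric_compat S.xi S.xi
  rw [phi_xi, g_zero_left, S.Q_xi, S.eta_xi, mul_one] at h
  exact sub_eq_zero.mp h.symm

lemma g_cov_xi_xi (X : S.VF) : S.g (S.cov X S.xi) S.xi = 0 := by
  have h := S.cov_metric X S.xi S.xi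
  rw [g_xi_xi, S.g_symm S.xi, show (1 : M → ℝ) = fun _ => 1 from rfl, S.deriv_const,
    ← two_mul] at h
  funext p
  simpa using congrFun h.symm p

lemma cov_xi_xi : S.cov S.xi S.xi = 0 := by
  have hns := S.nearlySasakian S.xi
  rw [phi_xi, cov_zero_right, g_xi_xi, S.eta_xi, sub_self, zero_sub, neg_eq_zero] at hns
  have hspan := S.eq_eta_fsmul_xi_of_phi_eq_zero hns
  have hη : S.eta (S.cov S.xi S.xi) = 0 := by
    have h := S.g_cov_xi_xi S.xi
    rwa [hspan, S.g_fsmul_left, g_xi_xi, mul_one] at h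
  rw [hspan, hη, zero_fsmul]

lemma h_xi : S.h S.xi = 0 := by
  rw [h, cov_xi_xi, phi_xi, add_zero]

lemma hmphi_eq_cov_xi (X : S.VF) : S.hmphi X = S.cov X S.xi := by
  rw [hmphi, h, add_sub_cancel_right]

end

/-- On a weak nearly Sasakian manifold, for every vector field `X`:
`(∇_X h) ξ = -h(h-φ)X` and `(∇_X φ) ξ = -φ(h-φ)X`. -/
theorem covh_xi_and_covPhi_xi {M : Type*} {n : ℕ}
    (S : WeakNearlySasakianManifold M n) :
    ∀ X : S.VF,
      S.covh X S.xi = -(S.h (S.hmphi X)) ∧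
      S.covPhi X S.xi = -(S.phi (S.hmphi X)) := by
  intro X
  constructor
  · rw [covh, h_xi, cov_zero_right, hmphi_eq_cov_xi, zero_sub]
  · rw [covPhi, phi_xi, cov_zero_right, hmphi_eq_cov_xi, zero_sub]

end WeakNearlySasakianManifold
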